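/- arXiv:1811.02995 — 3 statements merged into one kernel-verified Lean document; each statement's English description precedes it below -/
import Mathlib

section
/- Let Γ be a two-ended highly-arc-transitive digraph of prime out-valency p with fibre size m > 2. Then Γ is isomorphic to the r-fold partial line graph Pl^r(Δ_p), where r satisfies p^{r+1} = m, and Δ_p is the digraph on Z × Z_p with all arcs ((i,x),(i+1,y)). -/
variable {V : Type*}

/-- The automorphism group of a digraph given by its arc relation `E`. -/
def autGroup (E : V → V → Prop) : Subgroup (Equiv.Perm V) where
  carrier := {g | ∀ u v : V, E u v ↔ E (g u) (g v)}
  one_mem' := by intro u v; simp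
  mul_mem' := by
    intro a b ha hb u v
    simpa [Equiv.Perm.mul_apply] using (hb u v).trans (ha (b u) (b v))
  inv_mem' := by
    intro a ha u v
    simpa using (ha (a⁻¹ u) (a⁻¹ v)).symm

/-- Connectedness of a digraph (in the underlying undirected sense). -/
def DConnected (E : V → V → Prop) : Prop :=
  ∀ u v : V, Relation.ReflTransGen (fun a b => E a b ∨ E b a) u v

/-- `f : Fin (k+1) → V` is a `k`-arc. -/
def IsKArc (E : V → V → Prop) (k : ℕ) (f : Fin (k + 1) → V) : Prop :=
  ∀ i : Fin k, E (f i.castSucc) (f i.succ)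

def KArcTransitive (E : V → V → Prop) (k : ℕ) : Prop :=
  ∀ f g : Fin (k + 1) → V, IsKArc E k f → IsKArc E k g →
    ∃ a ∈ autGroup E, ∀ i, (a : Equiv.Perm V) (f i) = g i

def HighlyArcTransitive (E : V → V → Prop) : Prop :=
  ∀ k : ℕ, KArcTransitive E k

def VertexTransitive (E : V → V → Prop) : Prop :=
  ∀ u v : V, ∃ a ∈ autGroup E, (a : Equiv.Perm V) u = v

def ArcTransitive (E : V → V → Prop) : Prop :=
  ∀ u v x y : V, E u v → E x y →
    ∃ a ∈ autGroup E, (a : Equiv.Perm V) u = x ∧ (a : Equiv.Perm V) v = y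

/-- Reachability in the underlying undirected graph avoiding the vertex set `S`. -/
def ReachAvoid (E : V → V → Prop) (S : Set V) : V → V → Prop :=
  Relation.ReflTransGen (fun a b => (E a b ∨ E b a) ∧ a ∉ S ∧ b ∉ S)

/-- `u` lies in an infinite component of the complement of `S`. -/
def InfComp (E : V → V → Prop) (S : Set V) (u : V) : Prop :=
  u ∉ S ∧ {w | ReachAvoid E S u w}.Infinite

/-- A connected digraph with exactly two ends. -/
def TwoEnded (E : V → V → Prop) : Prop :=
  DConnected E ∧
  (∀ S : Set V, S.Finite → ∀ u v w : V, InfComp E S u → InfComp E S v → InfComp E S w →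
    ReachAvoid E S u v ∨ ReachAvoid E S u w ∨ ReachAvoid E S v w) ∧
  ∃ S : Set V, S.Finite ∧ ∃ u v : V, InfComp E S u ∧ InfComp E S v ∧ ¬ ReachAvoid E S u v

/-- The stabilizer of a vertex `v` in the automorphism group. -/
def vStab (E : V → V → Prop) (v : V) : Subgroup (autGroup E) where
  carrier := {g | (g : Equiv.Perm V) v = v}
  one_mem' := rfl
  mul_mem' := by
    intro a b ha hb
    simp only [Set.mem_setOf_eq] at *
    simp [Subgroup.coe_mul, Equiv.Perm.mul_apply, ha, hb]
  inv_mem' := by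
    intro a ha
    simp only [Set.mem_setOf_eq] at *
    have := congrArg (((a : Equiv.Perm V))⁻¹ : Equiv.Perm V) ha
    simpa using this.symm

def outSet (E : V → V → Prop) (v : V) : Set V := {u | E v u}
def inSet (E : V → V → Prop) (v : V) : Set V := {u | E u v}

/-- The stabilizer of `v` acts quasi-primitively on the set `Ω`. -/
def QuasiPrimitivelyOn (E : V → V → Prop) (v : V) (Ω : Set V) : Prop :=
  (∀ u ∈ Ω, ∀ w ∈ Ω, ∃ g ∈ vStab E v, ((g : autGroup E) : Equiv.Perm V) u = w) ∧
  (∀ N : Subgroup (vStab E v), N.Normal →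
    (∀ n ∈ N, ∀ u ∈ Ω, (((n : vStab E v) : autGroup E) : Equiv.Perm V) u = u) ∨
    (∀ u ∈ Ω, ∀ w ∈ Ω, ∃ n ∈ N, (((n : vStab E v) : autGroup E) : Equiv.Perm V) u = w))
universe u v

/-- A bundled digraph. -/
structure Digr : Type (u + 1) where
  V : Type u
  E : V → V → Prop

/-- The type of arcs of a digraph. -/
def Digr.Arc (D : Digr) : Type _ := {p : D.V × D.V // D.E p.1 p.2}

/-- The partial line graph: vertices are the arcs, with an arc from `(x,y)` to `(w,z)` iff `y = w`. -/
def Pl (D : Digr) : Digr := ⟨D.Arc, fun a b => a.1.2 = b.1.1⟩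

/-- The `r`-fold iterated partial line graph. -/
def PlIter : ℕ → Digr → Digr
  | 0, D => D
  | r + 1, D => Pl (PlIter r D)

/-- The digraph `Δ_p` on `ℤ × ZMod p` with all arcs `((i,x),(i+1,y))`. -/
def Delta (p : ℕ) : Digr := ⟨ℤ × ZMod p, fun a b => b.1 = a.1 + 1⟩

/-- Two arcs are related if they share an initial vertex or a terminal vertex;
the alternet relation is the equivalence relation generated by this. -/
def altRel (D : Digr) : D.Arc → D.Arc → Prop :=
  Relation.EqvGen (fun a b => a.1.1 = b.1.1 ∨ a.1.2 = b.1.2)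

def altSetoid (D : Digr) : Setoid D.Arc :=
  ⟨altRel D, Relation.EqvGen.is_equivalence _⟩

/-- The digraph of alternets: vertices are alternets, with an arc `(A, B)` whenever
a sink of `A` (a terminal vertex of an arc of `A`) is a source of `B`
(an initial vertex of an arc of `B`). -/
def Al (D : Digr) : Digr :=
  ⟨Quotient (altSetoid D),
    fun A B => ∃ a b : D.Arc, Quotient.mk (altSetoid D) a = A ∧
      Quotient.mk (altSetoid D) b = B ∧ a.1.2 = b.1.1⟩

/-- Isomorphism of digraphs. -/
def DigrIso (D₁ : Digr.{u}) (D₂ : Digr.{v}) : Prop :=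
  ∃ e : D₁.V ≃ D₂.V, ∀ u v : D₁.V, D₁.E u v ↔ D₂.E (e u) (e v)

/-!
Write `φ` for the height. The stabiliser of a vertex is transitive on its `p` out-neighbours
and on its `p` in-neighbours, so every invariant partition of either set is trivial. Take the
partition by out-neighbourhoods on the in-neighbours of a vertex. Were it discrete, the
pointwise stabiliser of a level would also fix the neighbouring levels, hence be trivial, so
vertex stabilisers would act faithfully on a finite level and be finite; but high
arc-transitivity makes the stabilisers of ever longer arcs a strictly decreasing chain. So
vertices with a common out-neighbour have equal out-neighbourhoods. On out-neighbours the same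
partition is discrete unless `m = p`: were it universal, two-endedness would make the
out-neighbourhood of a vertex a whole level. Identifying vertices with equal
out-neighbourhoods thus gives a digraph of the same kind with levels of size `m / p`, whose
partial line graph is the original one; at `m = p` consecutive levels are completely joined
and the digraph is `Δ_p`.
-/

open Set Function

lemma Set.ncard_eq_mul_ncard_image {α β : Type*} {s : Set α} (hs : s.Finite) (f : α → β) {t : ℕ}
    (ht : ∀ x ∈ s, {y ∈ s | f y = f x}.ncard = t) : s.ncard = t * (f '' s).ncard := by
  classical
  obtain ⟨s, rfl⟩ := hs.exists_finset_coe
  rw [← Finset.coe_image, ncard_coe_finset, ncard_coe_finset, Finset.card_eq_sum_card_image f s,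
    Finset.sum_const_nat, mul_comm]
  rintro _ hb
  obtain ⟨x, hx, rfl⟩ := Finset.mem_image.1 hb
  rw [← ht x hx, ← ncard_coe_finset, Finset.coe_filter]
  rfl

/-- All classes meet `Ω` in the same number of points, which divides the prime `Ω.ncard`. -/
lemma Setoid.forall_rel_or_forall_eq_of_prime_ncard {α : Type*} (r : Setoid α) {Ω : Set α}
    (hΩ : Ω.Finite) (hp : Ω.ncard.Prime) (G : Set (Equiv.Perm α))
    (hmaps : ∀ g ∈ G, MapsTo g Ω Ω) (htrans : ∀ x ∈ Ω, ∀ y ∈ Ω, ∃ g ∈ G, g x = y)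
    (hinv : ∀ g ∈ G, ∀ x y, r x y → r (g x) (g y)) :
    (∀ x ∈ Ω, ∀ y ∈ Ω, r x y) ∨ (∀ x ∈ Ω, ∀ y ∈ Ω, r x y → x = y) := by
  set C : α → Set α := fun x => {y ∈ Ω | r y x}
  have hC : ∀ x, C x = {y ∈ Ω | Quotient.mk r y = Quotient.mk r x} := fun x => by
    simp only [C, Quotient.eq]
  have hle : ∀ x ∈ Ω, ∀ y ∈ Ω, (C x).ncard ≤ (C y).ncard := fun x hx y hy => by
    obtain ⟨g, hg, rfl⟩ := htrans x hx y hy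
    exact ncard_le_ncard_of_injOn g (fun z hz => ⟨hmaps g hg hz.1, hinv g hg z x hz.2⟩)
      g.injective.injOn (hΩ.subset fun _ hz => hz.1)
  obtain ⟨x₀, hx₀⟩ := nonempty_of_ncard_ne_zero hp.ne_zero
  have hdvd : (C x₀).ncard ∣ Ω.ncard := ⟨_, Set.ncard_eq_mul_ncard_image hΩ (Quotient.mk r)
    fun x hx => by rw [← hC]; exact (hle x hx x₀ hx₀).antisymm (hle x₀ hx₀ x hx)⟩
  have hCfin : ∀ x, (C x).Finite := fun x => hΩ.subset fun _ hz => hz.1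
  rcases hp.eq_one_or_self_of_dvd _ hdvd with h1 | hfull
  · refine Or.inr fun x hx y hy hxy => ?_
    exact (ncard_le_one_iff (hCfin y)).1 (h1 ▸ hle y hy x₀ hx₀) ⟨hx, hxy⟩ ⟨hy, r.refl y⟩
  · refine Or.inl fun x hx y hy => r.symm ?_
    have hCx : C x = Ω :=
      eq_of_subset_of_ncard_le (fun _ hz => hz.1) (hfull ▸ hle x₀ hx₀ x hx) hΩ
    exact (hCx ▸ hy : y ∈ C x).2

section Digraph

variable {V : Type u} {E : V → V → Prop}

lemma mem_autGroup_iff {g : Equiv.Perm V} : g ∈ autGroup E ↔ ∀ u v, E u v ↔ E (g u) (g v) :=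
  Iff.rfl

lemma image_outSet_of_mem_autGroup {g : Equiv.Perm V} (hg : g ∈ autGroup E) (v : V) :
    g '' outSet E v = outSet E (g v) := by
  ext w
  rw [Equiv.image_eq_preimage_symm]
  simp only [mem_preimage, outSet, mem_ofPred_eq, mem_autGroup_iff.1 hg v, Equiv.apply_symm_apply]

lemma image_inSet_of_mem_autGroup {g : Equiv.Perm V} (hg : g ∈ autGroup E) (v : V) :
    g '' inSet E v = inSet E (g v) := by
  ext w
  rw [Equiv.image_eq_preimage_symm]
  simp only [mem_preimage, inSet, mem_ofPred_eq, mem_autGroup_iff.1 hg _ v, Equiv.apply_symm_apply]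

lemma outSet_eq_outSet_of_mem_autGroup {g : Equiv.Perm V} (hg : g ∈ autGroup E) {x y : V}
    (h : outSet E x = outSet E y) : outSet E (g x) = outSet E (g y) := by
  rw [← image_outSet_of_mem_autGroup hg, ← image_outSet_of_mem_autGroup hg, h]

lemma forall_outSet_eq_image {g : Equiv.Perm V} (hg : g ∈ autGroup E) {S : Set V}
    (h : ∀ x ∈ S, ∀ y ∈ S, outSet E x = outSet E y) :
    ∀ x ∈ g '' S, ∀ y ∈ g '' S, outSet E x = outSet E y := by
  rintro _ ⟨x, hx, rfl⟩ _ ⟨y, hy, rfl⟩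
  exact outSet_eq_outSet_of_mem_autGroup hg (h x hx y hy)

def autStab (E : V → V → Prop) (v : V) : Set (Equiv.Perm V) := {g | g ∈ autGroup E ∧ g v = v}

lemma mapsTo_outSet_of_mem_autStab {g : Equiv.Perm V} {v : V} (hg : g ∈ autStab E v) :
    MapsTo g (outSet E v) (outSet E v) := fun x hx => by
  simpa only [outSet, mem_ofPred_eq, hg.2] using (mem_autGroup_iff.1 hg.1 v x).1 hx

lemma mapsTo_inSet_of_mem_autStab {g : Equiv.Perm V} {v : V} (hg : g ∈ autStab E v) :
    MapsTo g (inSet E v) (inSet E v) := fun x hx => by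
  simpa only [inSet, mem_ofPred_eq, hg.2] using (mem_autGroup_iff.1 hg.1 x v).1 hx

lemma HighlyArcTransitive.vertexTransitive (hE : HighlyArcTransitive E) : VertexTransitive E :=
  fun u v => by
    obtain ⟨g, hg, h⟩ := hE 0 (fun _ => u) (fun _ => v) finZeroElim finZeroElim
    exact ⟨g, hg, h 0⟩

lemma HighlyArcTransitive.arcTransitive (hE : HighlyArcTransitive E) : ArcTransitive E :=
  fun u v x y huv hxy => by
    obtain ⟨g, hg, h⟩ := hE 1 ![u, v] ![x, y] (fun i => by fin_cases i; exact huv)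
      (fun i => by fin_cases i; exact hxy)
    exact ⟨g, hg, h 0, h 1⟩

lemma ArcTransitive.exists_mem_autStab_of_mem_outSet (hE : ArcTransitive E) {v x y : V}
    (hx : x ∈ outSet E v) (hy : y ∈ outSet E v) : ∃ g ∈ autStab E v, g x = y := by
  obtain ⟨g, hg, hv, hxy⟩ := hE v x v y hx hy
  exact ⟨g, ⟨hg, hv⟩, hxy⟩

lemma ArcTransitive.exists_mem_autStab_of_mem_inSet (hE : ArcTransitive E) {v x y : V}
    (hx : x ∈ inSet E v) (hy : y ∈ inSet E v) : ∃ g ∈ autStab E v, g x = y := by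
  obtain ⟨g, hg, hxy, hv⟩ := hE x v y v hx hy
  exact ⟨g, ⟨hg, hv⟩, hxy⟩

lemma VertexTransitive.exists_adj_to (hE : VertexTransitive E) (hout : ∀ v, ∃ w, E v w)
    (v : V) : ∃ u, E u v := by
  obtain ⟨w, hw⟩ := hout v
  obtain ⟨g, hg, hgw⟩ := hE w v
  exact ⟨g v, hgw ▸ (mem_autGroup_iff.1 hg v w).1 hw⟩

lemma VertexTransitive.ncard_inSet_eq (hE : VertexTransitive E) (u v : V) :
    (inSet E u).ncard = (inSet E v).ncard := by
  obtain ⟨g, hg, rfl⟩ := hE u v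
  rw [← image_inSet_of_mem_autGroup hg, ncard_image_of_injective _ g.injective]

lemma exists_ray {R : V → V → Prop} (h : ∀ v, ∃ w, R v w) (a : V) :
    ∃ w : ℕ → V, w 0 = a ∧ ∀ k, R (w k) (w (k + 1)) := by
  choose f hf using h
  exact ⟨fun k => f^[k] a, rfl, fun k => by
    simp only [iterate_succ_apply']; exact hf _⟩

lemma HighlyArcTransitive.exists_fix_prefix_map_succ (hE : HighlyArcTransitive E) {u : ℕ → V}
    (hu : ∀ k, E (u k) (u (k + 1))) (K : ℕ) {y : V} (hy : E (u K) y) :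
    ∃ g ∈ autGroup E, (∀ k ≤ K, g (u k) = u k) ∧ g (u (K + 1)) = y := by
  obtain ⟨g, hg, h⟩ := hE (K + 1) (fun i => u i) (fun i => if (i : ℕ) = K + 1 then y else u i)
    (fun i => hu i) (fun i => by
      simp only [Fin.val_castSucc, Fin.val_succ, add_left_inj, i.isLt.ne, if_false]
      split_ifs with h
      · rw [h]; exact hy
      · exact hu i)
  refine ⟨g, hg, fun k hk => ?_, by simpa using h (Fin.last _)⟩
  have hk' := h ⟨k, by omega⟩
  rwa [if_neg (by simp only; omega)] at hk'

/-- The stabilisers of the initial segments of a ray form a strictly decreasing chain. -/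
lemma HighlyArcTransitive.autStab_infinite (hE : HighlyArcTransitive E)
    (hout : ∀ v, (outSet E v).Nontrivial) (v : V) : (autStab E v).Infinite := by
  intro hfin
  obtain ⟨u, rfl, hu⟩ := exists_ray (fun v => (hout v).nonempty) v
  set T : ℕ → Set (Equiv.Perm V) := fun K => {g | g ∈ autGroup E ∧ ∀ k ≤ K, g (u k) = u k}
  have hTfin : ∀ K, (T K).Finite := fun K => hfin.subset fun g hg => ⟨hg.1, hg.2 0 K.zero_le⟩
  have hTlt : ∀ K, (T (K + 1)).ncard < (T K).ncard := fun K => by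
    obtain ⟨y, hy, hyu⟩ := (hout (u K)).exists_ne (u (K + 1))
    obtain ⟨g, hg, hfix, hmove⟩ := hE.exists_fix_prefix_map_succ hu K hy
    refine ncard_lt_ncard ⟨fun h hh => ⟨hh.1, fun k hk => hh.2 k (by omega)⟩, fun hsub => ?_⟩
      (hTfin K)
    exact hyu (hmove ▸ ((hsub ⟨hg, hfix⟩).2 (K + 1) le_rfl))
  have hTle : ∀ K, (T K).ncard + K ≤ (T 0).ncard := fun K => by
    induction K with
    | zero => rfl
    | succ K ih => have := hTlt K; omega
  have hTpos : 0 < (T (T 0).ncard).ncard :=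
    (ncard_pos (hTfin _)).2 ⟨1, one_mem _, fun _ _ => rfl⟩
  have := hTle (T 0).ncard
  omega

end Digraph

section Ends

variable {V : Type u} {E : V → V → Prop} {φ : V → ℤ}

lemma map_ray_eq {R : V → V → Prop} {c : ℤ} (hφ : ∀ x y, R x y → φ y = φ x + c) {w : ℕ → V}
    (hw : ∀ k, R (w k) (w (k + 1))) (k : ℕ) : φ (w k) = φ (w 0) + k * c := by
  induction k with
  | zero => simp
  | succ k ih => rw [hφ _ _ (hw k), ih]; push_cast; ring

lemma lt_iff_lt_of_reachAvoid (hφ : ∀ u v, E u v → φ v = φ u + 1) {i : ℤ} {a b : V}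
    (h : ReachAvoid E (φ ⁻¹' {i}) a b) : i < φ a ↔ i < φ b := by
  induction h with
  | refl => rfl
  | tail _ hbc ih =>
    obtain ⟨hE | hE, hb, hc⟩ := hbc
    all_goals
      have := hφ _ _ hE
      simp only [mem_preimage, mem_singleton_iff] at hb hc
      omega

lemma infComp_of_ray {S : Set V} {w : ℕ → V} (hinj : Injective w)
    (hstep : ∀ k, E (w k) (w (k + 1)) ∨ E (w (k + 1)) (w k)) (hS : ∀ k, w k ∉ S) :
    InfComp E S (w 0) := by
  refine ⟨hS 0, infinite_of_injective_forall_mem hinj fun k => ?_⟩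
  induction k with
  | zero => exact Relation.ReflTransGen.refl
  | succ k ih => exact ih.tail ⟨hstep k, hS k, hS (k + 1)⟩

lemma infComp_of_lt (hφ : ∀ u v, E u v → φ v = φ u + 1) (hout : ∀ v, ∃ w, E v w) {i : ℤ}
    {a : V} (ha : i < φ a) : InfComp E (φ ⁻¹' {i}) a := by
  obtain ⟨w, rfl, hw⟩ := exists_ray hout a
  have hφw := map_ray_eq hφ hw
  refine infComp_of_ray (fun k l hkl => ?_) (fun k => Or.inl (hw k)) (fun k hk => ?_)
  · have := hφw k; have := hφw l; rw [hkl] at *; omega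
  · have := hφw k; simp only [mem_preimage, mem_singleton_iff] at hk; omega

lemma infComp_of_gt (hφ : ∀ u v, E u v → φ v = φ u + 1) (hin : ∀ v, ∃ u, E u v) {i : ℤ}
    {a : V} (ha : φ a < i) : InfComp E (φ ⁻¹' {i}) a := by
  obtain ⟨w, rfl, hw⟩ := exists_ray hin a
  have hφw := map_ray_eq (φ := φ) (c := -1) (fun x y h => by rw [hφ y x h]; ring) hw
  refine infComp_of_ray (fun k l hkl => ?_) (fun k => Or.inr (hw k)) (fun k hk => ?_)
  · have := hφw k; have := hφw l; rw [hkl] at *; omega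
  · have := hφw k; simp only [mem_preimage, mem_singleton_iff] at hk; omega

/-- Of the three infinite components through `u`, `v` and a vertex below level `i`, two
must meet; the one below cannot meet the others without crossing level `i`. -/
lemma TwoEnded.reachAvoid_of_lt (h2 : TwoEnded E) (hφ : ∀ u v, E u v → φ v = φ u + 1)
    (hfin : ∀ i, (φ ⁻¹' {i}).Finite) (hout : ∀ v, ∃ w, E v w) (hin : ∀ v, ∃ u, E u v)
    {i : ℤ} {u v : V} (hu : i < φ u) (hv : i < φ v) : ReachAvoid E (φ ⁻¹' {i}) u v := by
  obtain ⟨w, hw0, hw⟩ := exists_ray hin u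
  have hφw := map_ray_eq (φ := φ) (c := -1) (fun x y h => by rw [hφ y x h]; ring) hw
  obtain ⟨x, hx⟩ : ∃ x, φ x < i :=
    ⟨w (φ u - i + 1).toNat, by have := hφw (φ u - i + 1).toNat; rw [hw0] at this; omega⟩
  rcases h2.2.1 _ (hfin i) u v x (infComp_of_lt hφ hout hu) (infComp_of_lt hφ hout hv)
    (infComp_of_gt hφ hin hx) with h | h | h
  · exact h
  · have := (lt_iff_lt_of_reachAvoid hφ h).1 hu; omega
  · have := (lt_iff_lt_of_reachAvoid hφ h).1 hv; omega

end Ends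

universe w₁ w₂ w₃

lemma DigrIso.symm {D₁ : Digr.{w₁}} {D₂ : Digr.{w₂}} (h : DigrIso D₁ D₂) : DigrIso D₂ D₁ := by
  obtain ⟨e, he⟩ := h
  exact ⟨e.symm, fun u v => by rw [he, e.apply_symm_apply, e.apply_symm_apply]⟩

lemma DigrIso.trans {D₁ : Digr.{w₁}} {D₂ : Digr.{w₂}} {D₃ : Digr.{w₃}}
    (h₁ : DigrIso D₁ D₂) (h₂ : DigrIso D₂ D₃) : DigrIso D₁ D₃ := by
  obtain ⟨e, he⟩ := h₁
  obtain ⟨f, hf⟩ := h₂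
  exact ⟨e.trans f, fun u v => (he u v).trans (hf (e u) (e v))⟩

lemma DigrIso.pl {D₁ : Digr.{w₁}} {D₂ : Digr.{w₂}} (h : DigrIso D₁ D₂) :
    DigrIso (Pl D₁) (Pl D₂) := by
  obtain ⟨e, he⟩ := h
  let eArc : D₁.Arc ≃ D₂.Arc :=
    (e.prodCongr e).subtypeEquiv fun a => he a.1 a.2
  exact ⟨eArc, fun a b => e.apply_eq_iff_eq.symm⟩

lemma exists_equiv_int_prod_zmod {V : Type u} {φ : V → ℤ} {n : ℕ} [NeZero n]
    (h : ∀ i, (φ ⁻¹' {i}).ncard = n) : ∃ e : ℤ × ZMod n ≃ V, ∀ x, φ (e x) = x.1 := by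
  have hfib : ∀ i, Nonempty (ZMod n ≃ φ ⁻¹' {i}) := fun i => by
    have : Finite (φ ⁻¹' {i}) :=
      (finite_of_ncard_pos (by rw [h i]; exact Nat.pos_of_neZero n)).to_subtype
    rw [← Finite.card_eq, Nat.card_zmod, Nat.card_coe_set_eq, h i]
  let e : ℤ × ZMod n ≃ V := (Equiv.sigmaEquivProd ℤ (ZMod n)).symm.trans
    ((Equiv.sigmaCongrRight fun i => (hfib i).some).trans (Equiv.sigmaFiberEquiv φ))
  exact ⟨e, fun x => ((hfib x.1).some x.2).2⟩

section FibreFixer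

variable {V : Type u} {E : V → V → Prop} {φ : V → ℤ}

def fibreFixer (E : V → V → Prop) (φ : V → ℤ) (j : ℤ) : Subgroup (Equiv.Perm V) :=
  autGroup E ⊓ fixingSubgroup (Equiv.Perm V) (φ ⁻¹' {j})

lemma mem_fibreFixer {j : ℤ} {n : Equiv.Perm V} :
    n ∈ fibreFixer E φ j ↔ n ∈ autGroup E ∧ ∀ w, φ w = j → n w = w := by
  simp [fibreFixer, mem_fixingSubgroup_iff, Equiv.Perm.smul_def]

lemma orbitRel_fibreFixer_iff {j : ℤ} {x y : V} :
    MulAction.orbitRel (fibreFixer E φ j) V x y ↔ ∃ n ∈ fibreFixer E φ j, n y = x := by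
  simp [MulAction.orbitRel_apply, MulAction.mem_orbit_iff, Subgroup.smul_def, Equiv.Perm.smul_def]

lemma conj_mem_fibreFixer {j : ℤ} {g n : Equiv.Perm V} (hg : g ∈ autGroup E)
    (hgφ : ∀ x, φ (g x) = φ x) (hn : n ∈ fibreFixer E φ j) : g * n * g⁻¹ ∈ fibreFixer E φ j := by
  rw [mem_fibreFixer] at hn ⊢
  refine ⟨mul_mem (mul_mem hg hn.1) (inv_mem hg), fun w hw => ?_⟩
  have : φ (g⁻¹ w) = j := by rw [← hgφ, Equiv.Perm.coe_inv, Equiv.apply_symm_apply, hw]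
  rw [Equiv.Perm.mul_apply, Equiv.Perm.mul_apply, hn.2 _ this, Equiv.Perm.coe_inv,
    Equiv.apply_symm_apply]

end FibreFixer

section OutNbhdDigr

variable {V : Type u} {E : V → V → Prop}

/-- `E` with vertices of equal out-neighbourhood identified, each class represented by that
out-neighbourhood. -/
def outNbhdDigr (E : V → V → Prop) : Digr.{u} :=
  ⟨range (outSet E), fun A B => ∃ b ∈ (A : Set V), outSet E b = B⟩

def outNbhd (E : V → V → Prop) (v : V) : (outNbhdDigr E).V := ⟨outSet E v, v, rfl⟩

lemma outNbhd_surjective : Surjective (outNbhd E) := fun ⟨_, v, rfl⟩ => ⟨v, rfl⟩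

lemma outNbhd_eq_outNbhd_iff {a b : V} : outNbhd E a = outNbhd E b ↔ outSet E a = outSet E b :=
  Subtype.ext_iff

lemma outNbhdDigr_adj_outNbhd_iff {a : V} {B : (outNbhdDigr E).V} :
    (outNbhdDigr E).E (outNbhd E a) B ↔ ∃ b ∈ outSet E a, outNbhd E b = B :=
  exists_congr fun _ => and_congr_right fun _ => ⟨fun h => Subtype.ext h, congrArg Subtype.val⟩

lemma outNbhdDigr_adj_of_adj {a b : V} (h : E a b) :
    (outNbhdDigr E).E (outNbhd E a) (outNbhd E b) :=
  ⟨b, h, rfl⟩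

def outNbhdPerm {g : Equiv.Perm V} (hg : g ∈ autGroup E) : Equiv.Perm (outNbhdDigr E).V :=
  (Equiv.Set.congr g).subtypeEquiv fun A => by
    constructor
    · rintro ⟨a, rfl⟩
      exact ⟨g a, (image_outSet_of_mem_autGroup hg a).symm⟩
    · rintro ⟨b, hb⟩
      refine ⟨g⁻¹ b, ?_⟩
      rw [← image_outSet_of_mem_autGroup (inv_mem hg), hb]
      exact g.symm_image_image A

lemma outNbhdPerm_outNbhd {g : Equiv.Perm V} (hg : g ∈ autGroup E) (x : V) :
    outNbhdPerm hg (outNbhd E x) = outNbhd E (g x) :=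
  Subtype.ext (image_outSet_of_mem_autGroup hg x)

lemma outNbhdPerm_mem_autGroup {g : Equiv.Perm V} (hg : g ∈ autGroup E) :
    outNbhdPerm hg ∈ autGroup (outNbhdDigr E).E := by
  have hadj : ∀ g (hg : g ∈ autGroup E) (a b : V),
      (outNbhdDigr E).E (outNbhd E a) (outNbhd E b) →
      (outNbhdDigr E).E (outNbhd E (g a)) (outNbhd E (g b)) := fun g hg a b => by
    simp only [outNbhdDigr_adj_outNbhd_iff, outNbhd_eq_outNbhd_iff]
    rintro ⟨c, hc, hcb⟩
    exact ⟨g c, (mem_autGroup_iff.1 hg a c).1 hc, outSet_eq_outSet_of_mem_autGroup hg hcb⟩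
  intro A B
  obtain ⟨a, rfl⟩ := outNbhd_surjective A
  obtain ⟨b, rfl⟩ := outNbhd_surjective B
  rw [outNbhdPerm_outNbhd, outNbhdPerm_outNbhd]
  refine ⟨hadj g hg a b, fun h => ?_⟩
  simpa using hadj g⁻¹ (inv_mem hg) _ _ h

lemma exists_isKArc_lift {k : ℕ} {f : Fin (k + 1) → (outNbhdDigr E).V}
    (hf : IsKArc (outNbhdDigr E).E k f) :
    ∃ f' : Fin (k + 1) → V, IsKArc E k f' ∧ ∀ i, outNbhd E (f' i) = f i := by
  obtain ⟨a, ha⟩ := (f 0).2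
  choose b hb hbf using hf
  have hlift : ∀ i, outNbhd E ((Fin.cons a b : Fin (k + 1) → V) i) = f i := fun i => by
    refine Fin.cases ?_ (fun i => ?_) i
    · rw [Fin.cons_zero]; exact Subtype.ext ha
    · rw [Fin.cons_succ]; exact Subtype.ext (hbf i)
  refine ⟨Fin.cons a b, fun i => ?_, hlift⟩
  change (Fin.cons a b : Fin (k + 1) → V) i.succ ∈
    (outNbhd E ((Fin.cons a b : Fin (k + 1) → V) i.castSucc)).1
  rw [Fin.cons_succ, hlift]
  exact hb i

lemma HighlyArcTransitive.outNbhdDigr (hE : HighlyArcTransitive E) :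
    HighlyArcTransitive (outNbhdDigr E).E := fun k f g hf hg => by
  obtain ⟨f', hf', hff⟩ := exists_isKArc_lift hf
  obtain ⟨g', hg', hgg⟩ := exists_isKArc_lift hg
  obtain ⟨a, ha, hag⟩ := hE k f' g' hf' hg'
  exact ⟨outNbhdPerm ha, outNbhdPerm_mem_autGroup ha, fun i => by
    rw [← hff, ← hgg, outNbhdPerm_outNbhd, hag]⟩

end OutNbhdDigr

noncomputable def outNbhdHeight {V : Type u} (E : V → V → Prop) (φ : V → ℤ) :
    (outNbhdDigr E).V → ℤ :=
  fun A => φ A.2.choose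

/-- A highly-arc-transitive digraph of out-valency `p` with a height `φ` whose levels have `m`
vertices; `reachAvoid_of_lt` is what two-endedness contributes: deleting a level leaves
everything above it connected. -/
structure HATLayering {V : Type u} (E : V → V → Prop) (φ : V → ℤ) (p m : ℕ) : Prop where
  hat : HighlyArcTransitive E
  map_of_adj : ∀ u v, E u v → φ v = φ u + 1
  ncard_outSet : ∀ v, (outSet E v).ncard = p
  ncard_fibre : ∀ i : ℤ, (φ ⁻¹' {i}).ncard = m
  prime : p.Prime
  pos : 0 < m
  reachAvoid_of_lt : ∀ i u v, i < φ u → i < φ v → ReachAvoid E (φ ⁻¹' {i}) u v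

namespace HATLayering

variable {V : Type u} {E : V → V → Prop} {φ : V → ℤ} {p m : ℕ} (hL : HATLayering E φ p m)
include hL

lemma fibre_finite (i : ℤ) : (φ ⁻¹' {i}).Finite :=
  finite_of_ncard_pos (hL.ncard_fibre i ▸ hL.pos)

lemma fibre_nonempty (i : ℤ) : (φ ⁻¹' {i}).Nonempty :=
  nonempty_of_ncard_ne_zero (hL.ncard_fibre i ▸ hL.pos.ne')

lemma outSet_subset (v : V) : outSet E v ⊆ φ ⁻¹' {φ v + 1} :=
  fun _ hw => hL.map_of_adj _ _ hw

lemma inSet_subset (v : V) : inSet E v ⊆ φ ⁻¹' {φ v - 1} :=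
  fun _ hu => by simp [hL.map_of_adj _ _ hu]

lemma outSet_finite (v : V) : (outSet E v).Finite :=
  (hL.fibre_finite _).subset (hL.outSet_subset v)

lemma inSet_finite (v : V) : (inSet E v).Finite :=
  (hL.fibre_finite _).subset (hL.inSet_subset v)

lemma outSet_nontrivial (v : V) : (outSet E v).Nontrivial := by
  refine (one_lt_ncard_iff_nontrivial_and_finite.1 ?_).1
  rw [hL.ncard_outSet]
  exact hL.prime.one_lt

lemma le_fibre : p ≤ m := by
  obtain ⟨v, -⟩ := hL.fibre_nonempty 0
  rw [← hL.ncard_outSet v, ← hL.ncard_fibre (φ v + 1)]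
  exact ncard_le_ncard (hL.outSet_subset v) (hL.fibre_finite _)

/-- Double counting the arcs between two consecutive levels. -/
lemma ncard_inSet (v : V) : (inSet E v).ncard = p := by
  classical
  set A := (hL.fibre_finite (φ v - 1)).toFinset
  set B := (hL.fibre_finite (φ v)).toFinset
  have hcount := Finset.sum_card_bipartiteAbove_eq_sum_card_bipartiteBelow (s := A) (t := B) E
  have habove : ∀ a ∈ A, (B.bipartiteAbove E a).card = p := fun a ha => by
    have hsub : outSet E a ⊆ B := by
      have ha : φ a = φ v - 1 := by simpa [A] using ha
      simpa [B, ha] using hL.outSet_subset a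
    rw [← hL.ncard_outSet a, ← ncard_coe_finset, Finset.coe_bipartiteAbove]
    exact congrArg ncard (sep_eq_of_subset hsub)
  have hbelow : ∀ b ∈ B, (A.bipartiteBelow E b).card = (inSet E v).ncard := fun b hb => by
    have hsub : inSet E b ⊆ A := by
      have hb : φ b = φ v := by simpa [B] using hb
      simpa [A, hb] using hL.inSet_subset b
    rw [hL.hat.vertexTransitive.ncard_inSet_eq v b, ← ncard_coe_finset,
      Finset.coe_bipartiteBelow]
    exact congrArg ncard (sep_eq_of_subset hsub)
  rw [Finset.sum_congr rfl habove, Finset.sum_congr rfl hbelow] at hcount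
  simp only [Finset.sum_const, smul_eq_mul, A, B, ← ncard_eq_toFinset_card, hL.ncard_fibre]
    at hcount
  exact (Nat.eq_of_mul_eq_mul_left hL.pos hcount).symm

lemma inSet_nontrivial (v : V) : (inSet E v).Nontrivial := by
  refine (one_lt_ncard_iff_nontrivial_and_finite.1 ?_).1
  rw [hL.ncard_inSet]
  exact hL.prime.one_lt

lemma dConnected : DConnected E := fun u v =>
  Relation.ReflTransGen.mono (fun _ _ h => h.1) _ _
    (hL.reachAvoid_of_lt (min (φ u) (φ v) - 1) u v (by omega) (by omega))

lemma map_apply_sub_eq {g : Equiv.Perm V} (hg : g ∈ autGroup E) (x y : V) :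
    φ (g x) - φ x = φ (g y) - φ y := by
  induction hL.dConnected x y with
  | refl => rfl
  | tail _ hbc ih =>
    rcases hbc with h | h
    all_goals
      have := hL.map_of_adj _ _ h
      have := hL.map_of_adj _ _ ((mem_autGroup_iff.1 hg _ _).1 h)
      omega

lemma map_apply_of_mem_autStab {g : Equiv.Perm V} {v : V} (hg : g ∈ autStab E v) (x : V) :
    φ (g x) = φ x := by
  have := hL.map_apply_sub_eq hg.1 x v
  rw [hg.2] at this
  omega

lemma forall_rel_or_forall_eq_outSet (r : Setoid V) (v : V)
    (hr : ∀ g ∈ autStab E v, ∀ x y, r x y → r (g x) (g y)) :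
    (∀ x ∈ outSet E v, ∀ y ∈ outSet E v, r x y) ∨
      (∀ x ∈ outSet E v, ∀ y ∈ outSet E v, r x y → x = y) :=
  r.forall_rel_or_forall_eq_of_prime_ncard (hL.outSet_finite v)
    (hL.ncard_outSet v ▸ hL.prime) (autStab E v) (fun _ hg => mapsTo_outSet_of_mem_autStab hg)
    (fun _ hx _ hy => hL.hat.arcTransitive.exists_mem_autStab_of_mem_outSet hx hy) hr

lemma forall_rel_or_forall_eq_inSet (r : Setoid V) (v : V)
    (hr : ∀ g ∈ autStab E v, ∀ x y, r x y → r (g x) (g y)) :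
    (∀ x ∈ inSet E v, ∀ y ∈ inSet E v, r x y) ∨
      (∀ x ∈ inSet E v, ∀ y ∈ inSet E v, r x y → x = y) :=
  r.forall_rel_or_forall_eq_of_prime_ncard (hL.inSet_finite v)
    (hL.ncard_inSet v ▸ hL.prime) (autStab E v) (fun _ hg => mapsTo_inSet_of_mem_autStab hg)
    (fun _ hx _ hy => hL.hat.arcTransitive.exists_mem_autStab_of_mem_inSet hx hy) hr

lemma inSet_eq_outSet_of_outSet_eq {z u b : V}
    (hz : ∀ x ∈ outSet E z, ∀ y ∈ outSet E z, outSet E x = outSet E y)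
    (hzu : E z u) (hub : E u b) : inSet E b = outSet E z := by
  refine (eq_of_subset_of_ncard_le (fun x hx => ?_) ?_ (hL.inSet_finite b)).symm
  · change b ∈ outSet E x
    rw [hz x hx u hzu]
    exact hub
  · rw [hL.ncard_inSet, hL.ncard_outSet]

/-- When out-neighbours always share their out-neighbourhood, consecutive out-neighbourhoods
along a ray are completely joined, and together they form a whole component above a level. -/
lemma exists_mem_outSet_ray_of_reachAvoid
    (hdeg : ∀ z, ∀ x ∈ outSet E z, ∀ y ∈ outSet E z, outSet E x = outSet E y)
    {w : ℕ → V} (hw : ∀ k, E (w k) (w (k + 1))) {y : V}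
    (hy : ReachAvoid E (φ ⁻¹' {φ (w 0)}) (w 1) y) : ∃ k, y ∈ outSet E (w k) := by
  induction hy with
  | refl => exact ⟨0, hw 0⟩
  | @tail b c _ hbc ih =>
    obtain ⟨k, hk⟩ := ih
    obtain ⟨hE | hE, -, hc⟩ := hbc
    · refine ⟨k + 1, ?_⟩
      rw [← hdeg (w k) b hk (w (k + 1)) (hw k)]
      exact hE
    · cases k with
      | zero =>
        have := hL.map_of_adj _ _ hE
        have := hL.map_of_adj _ _ hk
        simp only [mem_preimage, mem_singleton_iff] at hc
        omega
      | succ k =>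
        refine ⟨k, ?_⟩
        rw [← hL.inSet_eq_outSet_of_outSet_eq (hdeg (w k)) (hw k) hk]
        exact hE

lemma le_of_forall_outSet_eq {z : V}
    (hz : ∀ x ∈ outSet E z, ∀ y ∈ outSet E z, outSet E x = outSet E y) : m ≤ p := by
  have hdeg : ∀ z', ∀ x ∈ outSet E z', ∀ y ∈ outSet E z', outSet E x = outSet E y := fun z' => by
    obtain ⟨g, hg, rfl⟩ := hL.hat.vertexTransitive z z'
    rw [← image_outSet_of_mem_autGroup hg]
    exact forall_outSet_eq_image hg hz
  obtain ⟨w, rfl, hw⟩ := exists_ray (fun v => (hL.outSet_nontrivial v).nonempty) z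
  have hφw := map_ray_eq hL.map_of_adj hw
  have hfibre : φ ⁻¹' {φ (w 0) + 1} ⊆ outSet E (w 0) := fun x hx => by
    have hx : φ x = φ (w 0) + 1 := hx
    obtain ⟨k, hk⟩ := hL.exists_mem_outSet_ray_of_reachAvoid hdeg hw
      (hL.reachAvoid_of_lt _ _ x (by have := hφw 1; omega) (by omega))
    obtain rfl : k = 0 := by have := hL.map_of_adj _ _ hk; have := hφw k; omega
    exact hk
  rw [← hL.ncard_fibre (φ (w 0) + 1), ← hL.ncard_outSet (w 0)]
  exact ncard_le_ncard hfibre (hL.outSet_finite _)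

lemma injOn_outSet_outSet (hpm : p < m) (z : V) : InjOn (outSet E) (outSet E z) := by
  rcases hL.forall_rel_or_forall_eq_outSet (Setoid.ker (outSet E)) z
    (fun _ hg _ _ => outSet_eq_outSet_of_mem_autGroup hg.1) with hall | hinj
  · exact absurd (hL.le_of_forall_outSet_eq hall) hpm.not_ge
  · exact hinj

lemma outSet_apply_of_mem_fibreFixer {j : ℤ} {n : Equiv.Perm V} (hn : n ∈ fibreFixer E φ j)
    {a : V} (ha : φ a + 1 = j) : outSet E (n a) = outSet E a := by
  rw [mem_fibreFixer] at hn
  rw [← image_outSet_of_mem_autGroup hn.1]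
  exact EqOn.image_eq_self fun x hx => hn.2 x (ha ▸ hL.map_of_adj _ _ hx)

lemma inSet_apply_of_mem_fibreFixer {j : ℤ} {n : Equiv.Perm V} (hn : n ∈ fibreFixer E φ j)
    {a : V} (ha : φ a = j + 1) : inSet E (n a) = inSet E a := by
  rw [mem_fibreFixer] at hn
  rw [← image_inSet_of_mem_autGroup hn.1]
  exact EqOn.image_eq_self fun x hx => hn.2 x (by have := hL.map_of_adj _ _ hx; omega)

lemma orbitRel_fibreFixer_apply {j : ℤ} {v : V} {g : Equiv.Perm V} (hg : g ∈ autStab E v)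
    {x y : V} (h : MulAction.orbitRel (fibreFixer E φ j) V x y) :
    MulAction.orbitRel (fibreFixer E φ j) V (g x) (g y) := by
  rw [orbitRel_fibreFixer_iff] at h ⊢
  obtain ⟨n, hn, rfl⟩ := h
  exact ⟨g * n * g⁻¹, conj_mem_fibreFixer hg.1 (hL.map_apply_of_mem_autStab hg) hn, by simp⟩

lemma apply_eq_of_mem_fibreFixer_add_one (hB : ∀ v, InjOn (outSet E) (inSet E v))
    {n : Equiv.Perm V} {w : V} (hn : n ∈ fibreFixer E φ (φ w + 1)) : n w = w := by
  obtain ⟨v, hv⟩ := (hL.outSet_nontrivial w).nonempty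
  have hφv : φ v = φ w + 1 := hL.map_of_adj _ _ hv
  rcases hL.forall_rel_or_forall_eq_inSet (MulAction.orbitRel (fibreFixer E φ (φ w + 1)) V) v
    (fun _ hg _ _ => hL.orbitRel_fibreFixer_apply hg) with hall | hdisc
  · obtain ⟨a, ha, b, hb, hab⟩ := hL.inSet_nontrivial v
    obtain ⟨n', hn', rfl⟩ := orbitRel_fibreFixer_iff.1 (hall _ ha b hb)
    have hφb : φ b + 1 = φ w + 1 := hφv ▸ (hL.map_of_adj _ _ hb).symm
    exact absurd (hB v ha hb (hL.outSet_apply_of_mem_fibreFixer hn' hφb)) hab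
  · have hnv : n ∈ autStab E v := ⟨(mem_fibreFixer.1 hn).1, (mem_fibreFixer.1 hn).2 v hφv⟩
    exact hdisc _ (mapsTo_inSet_of_mem_autStab hnv hv) w hv
      (orbitRel_fibreFixer_iff.2 ⟨n, hn, rfl⟩)

lemma apply_eq_of_mem_fibreFixer_sub_one (hB : ∀ v, InjOn (outSet E) (inSet E v))
    {n : Equiv.Perm V} {w : V} (hn : n ∈ fibreFixer E φ (φ w - 1)) : n w = w := by
  obtain ⟨v, hv⟩ := (hL.inSet_nontrivial w).nonempty
  have hφv : φ v = φ w - 1 := by have := hL.map_of_adj _ _ hv; omega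
  rcases hL.forall_rel_or_forall_eq_outSet (MulAction.orbitRel (fibreFixer E φ (φ w - 1)) V) v
    (fun _ hg _ _ => hL.orbitRel_fibreFixer_apply hg) with hall | hdisc
  · have hin : ∀ x ∈ outSet E v, inSet E x = inSet E w := fun x hx => by
      obtain ⟨n', hn', rfl⟩ := orbitRel_fibreFixer_iff.1 (hall x hx w hv)
      exact hL.inSet_apply_of_mem_fibreFixer hn' (by omega)
    have hout : ∀ u ∈ inSet E w, outSet E u = outSet E v := fun u hu => by
      have hsub : outSet E v ⊆ outSet E u := fun y hy => ((hin y hy).symm ▸ hu : u ∈ inSet E y)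
      refine (eq_of_subset_of_ncard_le hsub ?_ (hL.outSet_finite u)).symm
      rw [hL.ncard_outSet, hL.ncard_outSet]
    obtain ⟨a, ha, b, hb, hab⟩ := hL.inSet_nontrivial w
    exact absurd (hB w ha hb ((hout a ha).trans (hout b hb).symm)) hab
  · have hnv : n ∈ autStab E v := ⟨(mem_fibreFixer.1 hn).1, (mem_fibreFixer.1 hn).2 v hφv⟩
    exact hdisc _ (mapsTo_outSet_of_mem_autStab hnv hv) w hv
      (orbitRel_fibreFixer_iff.2 ⟨n, hn, rfl⟩)

/-- Fixing one level pointwise forces fixing the neighbouring levels, hence everything. -/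
lemma eq_one_of_mem_fibreFixer (hB : ∀ v, InjOn (outSet E) (inSet E v)) {n : Equiv.Perm V}
    {j : ℤ} (hn : n ∈ fibreFixer E φ j) : n = 1 := by
  have hnE := (mem_fibreFixer.1 hn).1
  have hall : ∀ i, n ∈ fibreFixer E φ i := fun i => Int.inductionOn' i j hn
    (fun k _ hk => mem_fibreFixer.2 ⟨hnE, fun w hw =>
      hL.apply_eq_of_mem_fibreFixer_sub_one hB (by rwa [hw, add_sub_cancel_right])⟩)
    (fun k _ hk => mem_fibreFixer.2 ⟨hnE, fun w hw =>
      hL.apply_eq_of_mem_fibreFixer_add_one hB (by rwa [hw, sub_add_cancel])⟩)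
  exact Equiv.ext fun x => (mem_fibreFixer.1 (hall (φ x))).2 x rfl

lemma autStab_finite (hB : ∀ v, InjOn (outSet E) (inSet E v)) (v : V) : (autStab E v).Finite := by
  set F := φ ⁻¹' {φ v}
  have : Finite F := (hL.fibre_finite _).to_subtype
  refine Finite.of_finite_image (f := fun (g : Equiv.Perm V) (x : F) => g x) ?_
    fun g hg h hh hgh => ?_
  · refine (Finite.pi (t := fun _ => F) fun _ => hL.fibre_finite _).subset ?_
    rintro _ ⟨g, hg, rfl⟩ x -
    exact (hL.map_apply_of_mem_autStab hg x).trans x.2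
  · have hfix : h⁻¹ * g ∈ fibreFixer E φ (φ v) := mem_fibreFixer.2
      ⟨mul_mem (inv_mem hh.1) hg.1, fun w hw => by
        rw [Equiv.Perm.mul_apply, Equiv.Perm.inv_eq_iff_eq]
        exact congrFun hgh ⟨w, hw⟩⟩
    exact (inv_mul_eq_one.1 (hL.eq_one_of_mem_fibreFixer hB hfix)).symm

/-- Were this to fail, the in-neighbours of every vertex would have pairwise distinct
out-neighbourhoods, and vertex stabilisers would be finite. -/
lemma outSet_eq_of_mem_inSet {v x y : V} (hx : x ∈ inSet E v) (hy : y ∈ inSet E v) :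
    outSet E x = outSet E y := by
  by_contra hxy
  have hB : ∀ v', InjOn (outSet E) (inSet E v') := fun v' => by
    rcases hL.forall_rel_or_forall_eq_inSet (Setoid.ker (outSet E)) v'
      (fun _ hg _ _ => outSet_eq_outSet_of_mem_autGroup hg.1) with hall | hinj
    · obtain ⟨g, hg, rfl⟩ := hL.hat.vertexTransitive v' v
      rw [← image_inSet_of_mem_autGroup hg] at hx hy
      exact absurd (forall_outSet_eq_image hg hall x hx y hy) hxy
    · exact hinj
  exact hL.hat.autStab_infinite hL.outSet_nontrivial v (hL.autStab_finite hB v)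

lemma map_eq_of_outSet_eq {a b : V} (h : outSet E a = outSet E b) : φ a = φ b := by
  obtain ⟨w, hw⟩ := (hL.outSet_nontrivial a).nonempty
  have := hL.map_of_adj _ _ hw
  have := hL.map_of_adj _ _ (h ▸ hw : w ∈ outSet E b)
  omega

lemma outNbhdHeight_outNbhd (a : V) : outNbhdHeight E φ (outNbhd E a) = φ a :=
  hL.map_eq_of_outSet_eq (outNbhd E a).2.choose_spec

lemma preimage_outNbhdHeight (i : ℤ) :
    outNbhdHeight E φ ⁻¹' {i} = outNbhd E '' (φ ⁻¹' {i}) := by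
  ext A
  obtain ⟨a, rfl⟩ := outNbhd_surjective A
  simp only [mem_preimage, mem_singleton_iff, mem_image, hL.outNbhdHeight_outNbhd]
  refine ⟨fun ha => ⟨a, ha, rfl⟩, ?_⟩
  rintro ⟨b, rfl, hba⟩
  rw [← hL.outNbhdHeight_outNbhd, ← hba, hL.outNbhdHeight_outNbhd]

/-- Each out-neighbourhood is shared by exactly the `p` in-neighbours of any of its members. -/
lemma ncard_fibre_eq_mul (i : ℤ) : m = p * (outNbhdHeight E φ ⁻¹' {i}).ncard := by
  rw [hL.preimage_outNbhdHeight, ← hL.ncard_fibre i]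
  refine Set.ncard_eq_mul_ncard_image (hL.fibre_finite i) _ fun x hx => ?_
  obtain ⟨v, hv⟩ := (hL.outSet_nontrivial x).nonempty
  rw [← hL.ncard_inSet v]
  congr 1
  ext y
  simp only [mem_sep_iff, outNbhd_eq_outNbhd_iff]
  refine ⟨fun hy => (hy.2 ▸ hv : v ∈ outSet E y), fun hy => ⟨?_, hL.outSet_eq_of_mem_inSet hy hv⟩⟩
  exact (hL.map_eq_of_outSet_eq (hL.outSet_eq_of_mem_inSet hy hv)).trans hx

lemma outNbhdLayering (hpm : p < m) :
    HATLayering (_root_.outNbhdDigr E).E (outNbhdHeight E φ) p (m / p) where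
  hat := hL.hat.outNbhdDigr
  map_of_adj A B hAB := by
    obtain ⟨a, rfl⟩ := outNbhd_surjective A
    obtain ⟨b, hb, rfl⟩ := outNbhdDigr_adj_outNbhd_iff.1 hAB
    rw [hL.outNbhdHeight_outNbhd, hL.outNbhdHeight_outNbhd]
    exact hL.map_of_adj _ _ hb
  ncard_outSet A := by
    obtain ⟨a, rfl⟩ := outNbhd_surjective A
    have : outSet (outNbhdDigr E).E (outNbhd E a) = outNbhd E '' outSet E a := by
      ext B
      exact outNbhdDigr_adj_outNbhd_iff
    rw [this, InjOn.ncard_image fun x hx y hy hxy =>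
      hL.injOn_outSet_outSet hpm a hx hy (outNbhd_eq_outNbhd_iff.1 hxy), hL.ncard_outSet]
  ncard_fibre i := by
    rw [hL.ncard_fibre_eq_mul i, Nat.mul_div_cancel_left _ hL.prime.pos]
  prime := hL.prime
  pos := Nat.div_pos hL.le_fibre hL.prime.pos
  reachAvoid_of_lt i A B hA hB := by
    obtain ⟨a, rfl⟩ := outNbhd_surjective A
    obtain ⟨b, rfl⟩ := outNbhd_surjective B
    rw [hL.outNbhdHeight_outNbhd] at hA hB
    refine Relation.ReflTransGen.lift (outNbhd E) (fun x y hxy => ?_) _ _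
      (hL.reachAvoid_of_lt i a b hA hB)
    obtain ⟨hE, hx, hy⟩ := hxy
    refine ⟨hE.imp outNbhdDigr_adj_of_adj outNbhdDigr_adj_of_adj, ?_, ?_⟩ <;>
      simpa only [mem_preimage, mem_singleton_iff, hL.outNbhdHeight_outNbhd]

lemma digrIso_pl_outNbhdDigr (hpm : p < m) : DigrIso (Pl (_root_.outNbhdDigr E)) ⟨V, E⟩ := by
  choose z hz using fun v => (hL.inSet_nontrivial v).nonempty
  let ψ : V → (Pl (_root_.outNbhdDigr E)).V := fun v =>
    ⟨(outNbhd E (z v), outNbhd E v), outNbhdDigr_adj_of_adj (hz v)⟩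
  have hadj : ∀ x y, E x y ↔ (Pl (_root_.outNbhdDigr E)).E (ψ x) (ψ y) := fun x y => by
    change E x y ↔ outNbhd E x = outNbhd E (z y)
    rw [outNbhd_eq_outNbhd_iff]
    exact ⟨fun h => hL.outSet_eq_of_mem_inSet h (hz y), fun h => (h ▸ hz y : y ∈ outSet E x)⟩
  have hinj : Injective ψ := fun x y hxy => by
    replace hxy := congrArg Subtype.val hxy
    simp only [ψ, Prod.mk.injEq, outNbhd_eq_outNbhd_iff] at hxy
    exact hL.injOn_outSet_outSet hpm (z x) (hz x) (hxy.1 ▸ hz y) hxy.2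
  have hsurj : Surjective ψ := by
    rintro ⟨⟨A, B⟩, hAB⟩
    obtain ⟨a, rfl⟩ := outNbhd_surjective A
    obtain ⟨b, hb, rfl⟩ := outNbhdDigr_adj_outNbhd_iff.1 hAB
    refine ⟨b, Subtype.ext (Prod.ext ?_ rfl)⟩
    exact outNbhd_eq_outNbhd_iff.2 (hL.outSet_eq_of_mem_inSet (hz b) hb)
  exact DigrIso.symm ⟨Equiv.ofBijective ψ ⟨hinj, hsurj⟩, hadj⟩

lemma digrIso_delta (hpm : p = m) : DigrIso (Delta p) ⟨V, E⟩ := by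
  have : NeZero p := ⟨hL.prime.ne_zero⟩
  obtain ⟨e, he⟩ := exists_equiv_int_prod_zmod (n := p) fun i => hpm ▸ hL.ncard_fibre i
  have hcomplete : ∀ u w, E u w ↔ φ w = φ u + 1 := fun u w => by
    refine ⟨hL.map_of_adj u w, fun hw => ?_⟩
    have hfull : outSet E u = φ ⁻¹' {φ u + 1} := eq_of_subset_of_ncard_le (hL.outSet_subset u)
      (by rw [hL.ncard_fibre, hL.ncard_outSet, hpm]) (hL.fibre_finite _)
    exact (hfull ▸ hw : w ∈ outSet E u)
  refine ⟨e, fun (x y : ℤ × ZMod p) => ?_⟩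
  change y.1 = x.1 + 1 ↔ E (e x) (e y)
  rw [hcomplete, he, he]

theorem exists_digrIso_plIter : ∃ r : ℕ, p ^ (r + 1) = m ∧ DigrIso (PlIter r (Delta p)) ⟨V, E⟩ := by
  induction m using Nat.strong_induction_on generalizing V with
  | _ m ih =>
    rcases hL.le_fibre.eq_or_lt with hpm | hpm
    · exact ⟨0, by rw [zero_add, pow_one, hpm], hL.digrIso_delta hpm⟩
    · obtain ⟨r, hr, hiso⟩ := ih (m / p) (Nat.div_lt_self hL.pos hL.prime.one_lt)
        (hL.outNbhdLayering hpm)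
      refine ⟨r + 1, ?_, hiso.pl.trans (hL.digrIso_pl_outNbhdDigr hpm)⟩
      rw [pow_succ, hr, Nat.div_mul_cancel ⟨_, hL.ncard_fibre_eq_mul 0⟩]

end HATLayering

theorem two_ended_prime_valency_classification_general
    {V : Type u} (E : V → V → Prop)
    (h2 : TwoEnded E) (hhat : HighlyArcTransitive E)
    (p : ℕ) (hp : p.Prime) (hout : ∀ v : V, (outSet E v).ncard = p)
    (φ : V → ℤ)
    (hhom : ∀ u v : V, E u v → φ v = φ u + 1)
    (m : ℕ) (hm : 2 < m) (hfib : ∀ i : ℤ, (φ ⁻¹' {i}).ncard = m) :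
    ∃ r : ℕ, p ^ (r + 1) = m ∧ DigrIso (PlIter r (Delta p)) (Digr.mk V E) := by
  have hfin : ∀ i, (φ ⁻¹' {i}).Finite := fun i => finite_of_ncard_pos (by rw [hfib]; omega)
  have hsucc : ∀ v, ∃ w, E v w := fun v =>
    nonempty_of_ncard_ne_zero (s := outSet E v) (by rw [hout v]; exact hp.ne_zero)
  have hpred := hhat.vertexTransitive.exists_adj_to hsucc
  exact HATLayering.exists_digrIso_plIter ⟨hhat, hhom, hout, hfib, hp, by omega,
    fun _ _ _ hu hv => h2.reachAvoid_of_lt hhom hfin hsucc hpred hu hv⟩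

/-- A two-ended highly-arc-transitive digraph of prime out-valency `p`
with fibre size `m > 2` is isomorphic to the `r`-fold partial line graph
`Pl^r(Δ_p)`, where `p^(r+1) = m`. -/
theorem two_ended_prime_valency_classification
    {V : Type u} (E : V → V → Prop)
    (h2 : TwoEnded E) (hhat : HighlyArcTransitive E)
    (p : ℕ) (hp : p.Prime) (hout : ∀ v : V, (outSet E v).ncard = p)
    (φ : V → ℤ) (hsurj : Function.Surjective φ)
    (hhom : ∀ u v : V, E u v → φ v = φ u + 1)
    (m : ℕ) (hm : 2 < m) (hfib : ∀ i : ℤ, (φ ⁻¹' {i}).ncard = m) :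
    ∃ r : ℕ, p ^ (r + 1) = m ∧ DigrIso (PlIter r (Delta p)) (Digr.mk V E) :=
  two_ended_prime_valency_classification_general E h2 hhat p hp hout φ hhom m hm hfib
end

section
/- The automorphism group of the digraph Δ_p (vertex set Z × Z_p, arcs ((i,x),(i+1,y)) for all x, y ∈ Z_p) is isomorphic to the unrestricted wreath product Sym(Z_p) Wr Z, i.e., the semidirect product of the full direct product ∏_{i∈Z} Sym(Z_p) with Z acting by shifting coordinates. -/
variable {V : Type*}

universe u v

/-- The shift action of `ℤ` on the unrestricted direct product `∏_{i ∈ ℤ} Sym(ZMod p)`,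
translating the coordinates. -/
def shiftHom (p : ℕ) : Multiplicative ℤ →* MulAut (∀ _ : ℤ, Equiv.Perm (ZMod p)) where
  toFun n :=
    { toFun := fun f i => f (i - n.toAdd)
      invFun := fun f i => f (i + n.toAdd)
      left_inv := by intro f; funext i; simp
      right_inv := by intro f; funext i; simp
      map_mul' := fun f g => rfl }
  map_one' := by ext f i x; simp
  map_mul' := by intro a b; ext f i x; simp [sub_sub]

/-!
The wreath product acts faithfully on `ℤ × α` by `(f, n) • (i, x) = (i + n, f (i + n) x)`, and
its image is the set of permutations moving every layer `{i} × α` onto the layer `{i + n} × α`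
for one common `n`. These are exactly the automorphisms of `Δ_p`: each vertex of a layer is an
in-neighbour of each vertex of the next layer, so an automorphism shifts consecutive layers by
the same amount.
-/

open Equiv

namespace LayeredDigraph

variable (α : Type*)

/-- The shift of coordinates, for an arbitrary fibre `α`; `shiftHom p` is the case `α = ZMod p`. -/
def shift : Multiplicative ℤ →* MulAut (ℤ → Perm α) where
  toFun n :=
    { toFun := fun f i => f (i - n.toAdd)
      invFun := fun f i => f (i + n.toAdd)
      left_inv := fun f => by simp
      right_inv := fun f => by simp
      map_mul' := fun _ _ => rfl }
  map_one' := by ext; simp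
  map_mul' := by intro a b; ext; simp [sub_sub]

abbrev PermWr := SemidirectProduct (ℤ → Perm α) (Multiplicative ℤ) (shift α)

/-- The arc relation of `Δ_p`, with `ZMod p` replaced by `α`. -/
def arc (a b : ℤ × α) : Prop := b.1 = a.1 + 1

def wreathAction : PermWr α →* Perm (ℤ × α) where
  toFun g :=
    { toFun := fun v => (v.1 + g.right.toAdd, g.left (v.1 + g.right.toAdd) v.2)
      invFun := fun v => (v.1 - g.right.toAdd, (g.left v.1)⁻¹ v.2)
      left_inv := fun v => by simp
      right_inv := fun v => by simp }
  map_one' := by ext <;> simp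
  map_mul' g h := by
    ext v <;> simp [shift, ← add_assoc, add_right_comm _ g.right.toAdd]

variable {α}

@[simp]
lemma wreathAction_apply (g : PermWr α) (v : ℤ × α) :
    wreathAction α g v = (v.1 + g.right.toAdd, g.left (v.1 + g.right.toAdd) v.2) := rfl

def IsLayerShift (a : Perm (ℤ × α)) (n : ℤ) : Prop := ∀ v, (a v).1 = v.1 + n

lemma IsLayerShift.mem_autGroup {a : Perm (ℤ × α)} {n : ℤ} (ha : IsLayerShift a n) :
    a ∈ autGroup (arc α) := by
  intro u v
  simp only [arc, ha u, ha v]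
  omega

lemma exists_isLayerShift_of_mem_autGroup [Nonempty α] {a : Perm (ℤ × α)}
    (ha : a ∈ autGroup (arc α)) : ∃ n, IsLayerShift a n := by
  obtain ⟨x₀⟩ := ‹Nonempty α›
  let d : ℤ × α → ℤ := fun v => (a v).1 - v.1
  have hstep : ∀ i x y, d (i + 1, y) = d (i, x) := by
    intro i x y
    have : (a (i + 1, y)).1 = (a (i, x)).1 + 1 := (ha (i, x) (i + 1, y)).1 rfl
    simp only [d]
    omega
  refine ⟨d (0, x₀), fun v => ?_⟩
  suffices d v = d (0, x₀) by simp only [d] at this ⊢; omega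
  obtain ⟨i, x⟩ := v
  induction i using Int.induction_on generalizing x with
  | zero => rw [← hstep 0 x x₀, hstep]
  | succ k ih => rw [hstep k x₀ x, ih]
  | pred k ih => rw [← hstep (-k - 1) x x₀, sub_add_cancel, ih]

lemma isLayerShift_wreathAction (g : PermWr α) :
    IsLayerShift (wreathAction α g) g.right.toAdd := fun _ => rfl

/-- The permutation of `α` induced by a layer shift between the layers `j - n` and `j`. -/
def IsLayerShift.layerPerm {a : Perm (ℤ × α)} {n : ℤ} (ha : IsLayerShift a n) (j : ℤ) :
    Perm α where
  toFun x := (a (j - n, x)).2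
  invFun y := (a.symm (j, y)).2
  left_inv x := by
    have : a (j - n, x) = (j, (a (j - n, x)).2) := Prod.ext (by simp [ha _]) rfl
    simp [← this]
  right_inv y := by
    have hfst : (a.symm (j, y)).1 = j - n := by
      have := ha (a.symm (j, y))
      simp only [apply_symm_apply] at this
      omega
    have : (j - n, (a.symm (j, y)).2) = a.symm (j, y) := Prod.ext hfst.symm rfl
    simp only [this, apply_symm_apply]

lemma IsLayerShift.wreathAction_layerPerm {a : Perm (ℤ × α)} {n : ℤ} (ha : IsLayerShift a n) :
    wreathAction α ⟨ha.layerPerm, Multiplicative.ofAdd n⟩ = a := by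
  ext v
  · simp [ha v]
  · simp [layerPerm]

lemma mem_range_wreathAction_iff {a : Perm (ℤ × α)} :
    a ∈ (wreathAction α).range ↔ ∃ n, IsLayerShift a n := by
  constructor
  · rintro ⟨g, rfl⟩
    exact ⟨_, isLayerShift_wreathAction g⟩
  · rintro ⟨n, ha⟩
    exact ⟨_, ha.wreathAction_layerPerm⟩

lemma range_wreathAction [Nonempty α] : (wreathAction α).range = autGroup (arc α) := by
  ext a
  rw [mem_range_wreathAction_iff]
  exact ⟨fun ⟨_, ha⟩ => ha.mem_autGroup, exists_isLayerShift_of_mem_autGroup⟩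

lemma wreathAction_injective [Nonempty α] : Function.Injective (wreathAction α) := by
  obtain ⟨x₀⟩ := ‹Nonempty α›
  intro g h hgh
  have hright : g.right = h.right := by
    simpa using congrArg (fun a => (a (0, x₀)).1) hgh
  refine SemidirectProduct.ext (funext fun i => Perm.ext fun x => ?_) hright
  simpa [hright] using congrArg (fun a => (a (i - h.right.toAdd, x)).2) hgh

noncomputable def autGroupEquivPermWr [Nonempty α] : autGroup (arc α) ≃* PermWr α :=
  ((MonoidHom.ofInjective wreathAction_injective).trans
    (MulEquiv.subgroupCongr range_wreathAction)).symm

end LayeredDigraph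

/-- The automorphism group of `Δ_p` is isomorphic to the unrestricted
wreath product `Sym(ZMod p) Wr ℤ`, i.e. the semidirect product of `∏_{i ∈ ℤ} Sym(ZMod p)`
with `ℤ` acting by shifting coordinates. -/
theorem aut_Delta_iso_wreath (p : ℕ) :
    Nonempty (↥(autGroup (Delta p).E) ≃*
      SemidirectProduct (∀ _ : ℤ, Equiv.Perm (ZMod p)) (Multiplicative ℤ) (shiftHom p)) :=
  ⟨LayeredDigraph.autGroupEquivPermWr⟩
end

section
/- Let Γ be a digraph without sinks and without sources, and suppose Γ is asymmetric (no pair u ≠ v with both (u,v) and (v,u) arcs) and has no degenerate alternets. Then the digraph of alternets Al(Pl(Γ)) of the partial line graph of Γ is isomorphic to Γ. -/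
variable {V : Type*}

universe u v

/-- If `Γ` is a digraph without sinks and sources, asymmetric, and with
no degenerate alternets, then the digraph of alternets of its partial line graph,
`Al(Pl(Γ))`, is isomorphic to `Γ`. -/
theorem al_pl_iso
    {V : Type u} (E : V → V → Prop)
    (hnosink : ∀ v : V, ∃ u : V, E v u)
    (hnosource : ∀ v : V, ∃ u : V, E u v)
    (hasym : ∀ u v : V, u ≠ v → E u v → ¬ E v u)
    (hnodegen : ¬ ∃ a b : (Digr.mk V E).Arc, altRel (Digr.mk V E) a b ∧ a.1.2 = b.1.1) :
    DigrIso (Al (Pl (Digr.mk V E))) (Digr.mk V E) := by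
  classical
  let D : Digr := Digr.mk V E
  let P : Digr := Pl D
  let mid : P.Arc → V := fun a => a.1.1.1.2
  have hmid2 : ∀ a : P.Arc, a.1.2.1.1 = mid a := fun a => (a.2).symm
  have hlift : ∀ a b : P.Arc, altRel P a b → mid a = mid b := by
    intro a b h
    induction h with
    | rel x y h =>
      rcases h with h | h
      · exact congrArg (fun q => q.1.2) h
      · rw [← hmid2 x, ← hmid2 y]; exact congrArg (fun q => q.1.1) h
    | refl x => rfl
    | symm x y _ ih => exact ih.symm
    | trans x y z _ _ ih1 ih2 => exact ih1.trans ih2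
  have hsame : ∀ a b : P.Arc, mid a = mid b → altRel P a b := by
    intro a b h
    have hc : P.E a.1.1 b.1.2 := by
      show a.1.1.1.2 = b.1.2.1.1
      rw [hmid2 b]; exact h
    exact Relation.EqvGen.trans _ (⟨(a.1.1, b.1.2), hc⟩ : P.Arc) _
      (Relation.EqvGen.rel _ _ (Or.inl rfl))
      (Relation.EqvGen.rel _ _ (Or.inr rfl))
  let f : Quotient (altSetoid P) → V := Quotient.lift mid hlift
  have hfbij : Function.Bijective f := by
    constructor
    · intro A B
      induction A using Quotient.ind
      induction B using Quotient.ind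
      rename_i a b
      intro h
      exact Quotient.sound (hsame a b h)
    · intro v
      obtain ⟨w, hw⟩ := hnosink v
      obtain ⟨u, hu⟩ := hnosource v
      exact ⟨Quotient.mk _ (⟨((⟨(u, v), hu⟩ : D.Arc), (⟨(v, w), hw⟩ : D.Arc)), rfl⟩ : P.Arc), rfl⟩
  refine ⟨Equiv.ofBijective f hfbij, ?_⟩
  intro A B
  constructor
  · rintro ⟨a, b, rfl, rfl, hab⟩
    show E (mid a) (mid b)
    have h1 : b.1.1.1.1 = mid a := by rw [← hab]; exact hmid2 a
    have h2 : E b.1.1.1.1 b.1.1.1.2 := b.1.1.2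
    rwa [h1] at h2
  · intro h
    induction A using Quotient.ind
    induction B using Quotient.ind
    rename_i a b
    have hc : E (mid a) (mid b) := h
    have ha' : P.E a.1.1 (⟨(mid a, mid b), hc⟩ : D.Arc) := rfl
    have hb' : P.E (⟨(mid a, mid b), hc⟩ : D.Arc) b.1.2 := (hmid2 b).symm
    exact ⟨⟨(a.1.1, ⟨(mid a, mid b), hc⟩), ha'⟩, ⟨(⟨(mid a, mid b), hc⟩, b.1.2), hb'⟩,
      Quotient.sound (Relation.EqvGen.rel _ _ (Or.inl rfl)),
      Quotient.sound (Relation.EqvGen.rel _ _ (Or.inr rfl)), rfl⟩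
end
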